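/- arXiv:1105.0065 — 3 statements merged into one kernel-verified Lean document; each statement's English description precedes it below -/
import Mathlib

section
/- The sequence θ obtained by concatenating the blocks s_0 (-1) s_0, s_1 s_0 s_1, s_2 s_1 s_2, …, where s_i is the finite sequence of integers from -i to +i with step 2, is universal: every integer k appears in θ infinitely many times. -/
/-- `s i` is the finite sequence `(-i, -i+2, …, i-2, i)` of integers from `-i`
to `i` with step `2` (of length `i+1`). -/
def sSeq (i : ℕ) : List ℤ := (List.range (i + 1)).map (fun j : ℕ => -(i : ℤ) + 2 * (j : ℤ))

/-- The blocks `s_0 (-1) s_0`, `s_1 s_0 s_1`, `s_2 s_1 s_2`, … . -/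
def blockSeq : ℕ → List ℤ
  | 0 => sSeq 0 ++ [(-1 : ℤ)] ++ sSeq 0
  | n + 1 => sSeq (n + 1) ++ sSeq n ++ sSeq (n + 1)

lemma blockSeq_length_pos (n : ℕ) : 0 < (blockSeq n).length := by
  have h : ∀ m : ℕ, (sSeq m).length = m + 1 := by intro m; simp only [sSeq, List.length_map, List.length_range]
  cases n <;> simp [blockSeq, h]

/-- `thetaAux n t` is the `t`-th element of the concatenation of the blocks
`blockSeq n, blockSeq (n+1), …`. -/
def thetaAux (n t : ℕ) : ℤ :=
  if h : t < (blockSeq n).length then (blockSeq n).getD t 0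
  else thetaAux (n + 1) (t - (blockSeq n).length)
termination_by t
decreasing_by
  have := blockSeq_length_pos n
  omega

/-- The sequence `θ` obtained by concatenating the blocks
`s_0 (-1) s_0, s_1 s_0 s_1, s_2 s_1 s_2, …`. -/
def thetaSeq (t : ℕ) : ℤ := thetaAux 0 t

lemma mem_sSeq (k : ℤ) (i : ℕ) (h1 : k.natAbs ≤ i) (h2 : ((i : ℤ) + k) % 2 = 0) :
    k ∈ sSeq i := by
  simp only [sSeq, List.mem_map, List.mem_range]
  have hk1 : (k.natAbs : ℤ) ≤ (i : ℤ) := by exact_mod_cast h1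
  have hk2 : k ≤ (k.natAbs : ℤ) := Int.le_natAbs
  have hk3 : -(k.natAbs : ℤ) ≤ k := by
    have := Int.le_natAbs (a := -k)
    omega
  refine ⟨(((i : ℤ) + k) / 2).toNat, ?_, ?_⟩
  · have : ((((i : ℤ) + k) / 2).toNat : ℤ) = ((i : ℤ) + k) / 2 := by
      apply Int.toNat_of_nonneg; omega
    omega
  · have : ((((i : ℤ) + k) / 2).toNat : ℤ) = ((i : ℤ) + k) / 2 := by
      apply Int.toNat_of_nonneg; omega
    omega

lemma mem_blockSeq (k : ℤ) (n : ℕ) (h : k.natAbs + 1 ≤ n) : k ∈ blockSeq n := by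
  obtain ⟨m, rfl⟩ : ∃ m, n = m + 1 := ⟨n - 1, by omega⟩
  have hm : k.natAbs ≤ m := by omega
  rcases Int.emod_two_eq (((m : ℤ) + 1) + k) with h2 | h2
  · have : k ∈ sSeq (m + 1) := mem_sSeq k (m + 1) (by omega) (by push_cast; omega)
    simp [blockSeq, this]
  · have : k ∈ sSeq m := mem_sSeq k m hm (by push_cast at h2 ⊢; omega)
    simp [blockSeq, this]

/-- cumulative lengths -/
def S : ℕ → ℕ
  | 0 => 0
  | n + 1 => S n + (blockSeq n).length

lemma S_ge (n : ℕ) : n ≤ S n := by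
  induction n with
  | zero => simp [S]
  | succ m ih =>
    have := blockSeq_length_pos m
    simp only [S]; omega

lemma thetaAux_shift (n t : ℕ) : thetaAux 0 (S n + t) = thetaAux n t := by
  induction n generalizing t with
  | zero => simp [S]
  | succ m ih =>
    have : S (m + 1) + t = S m + ((blockSeq m).length + t) := by simp [S, Nat.add_assoc]
    rw [this, ih]
    rw [thetaAux]
    simp only [Nat.add_sub_cancel_left, dif_neg (by omega : ¬ (blockSeq m).length + t < (blockSeq m).length)]

/-- The sequence `θ = s_0 (-1) s_0 s_1 s_0 s_1 s_2 s_1 s_2 …` is universal: every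
integer appears in it infinitely many times. -/
theorem stmt_0 : ∀ k : ℤ, {t : ℕ | thetaSeq t = k}.Infinite := by
  intro k
  apply Set.infinite_of_forall_exists_gt
  intro a
  set n := max (a + 1) (k.natAbs + 1) with hn
  have hmem : k ∈ blockSeq n := mem_blockSeq k n (by omega)
  obtain ⟨j, hj, hjk⟩ := List.mem_iff_getElem.mp hmem
  refine ⟨S n + j, ?_, ?_⟩
  · show thetaSeq (S n + j) = k
    rw [thetaSeq, thetaAux_shift, thetaAux, dif_pos hj, List.getD_eq_getElem _ _ hj, hjk]
  · have := S_ge n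
    omega
end

section
/- Consider the Turing machine M with states {q_R, q_L}, tape alphabet {0,1,b}, transition function δ(q_R,b)=(q_L,1,L), δ(q_R,0)=(q_R,1,R), δ(q_R,1)=(q_R,1,R), δ(q_L,b)=(q_R,0,R), δ(q_L,0)=(q_L,0,L), δ(q_L,1)=(q_L,0,L), started in state q_R on the all-blank tape at position 0. Then for every tape position p ∈ ℤ, the head of M visits p infinitely many times during the (non-halting) run. -/
/-- States of the back-and-forth Turing machine. -/
inductive BFState | qR | qL
  deriving DecidableEq

/-- Tape symbols: `none` is the blank `b`, `some false` is `0`, `some true` is `1`. -/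
abbrev BFSymb := Option Bool

/-- The transition function `δ`: it returns `(new state, written symbol, direction)`,
where direction `true` means move right (`R`) and `false` means move left (`L`).
`δ(q_R,b)=(q_L,1,L)`, `δ(q_R,0)=(q_R,1,R)`, `δ(q_R,1)=(q_R,1,R)`,
`δ(q_L,b)=(q_R,0,R)`, `δ(q_L,0)=(q_L,0,L)`, `δ(q_L,1)=(q_L,0,L)`. -/
def BFdelta : BFState → BFSymb → BFState × BFSymb × Bool
  | BFState.qR, none => (BFState.qL, some true, false)
  | BFState.qR, some false => (BFState.qR, some true, true)
  | BFState.qR, some true => (BFState.qR, some true, true)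
  | BFState.qL, none => (BFState.qR, some false, true)
  | BFState.qL, some false => (BFState.qL, some false, false)
  | BFState.qL, some true => (BFState.qL, some false, false)

/-- Instantaneous configurations `(tape, state, head position)`. -/
abbrev BFCfg := (ℤ → BFSymb) × BFState × ℤ

/-- One step of the machine. -/
def BFstep (c : BFCfg) : BFCfg :=
  let r := BFdelta c.2.1 (c.1 c.2.2)
  (Function.update c.1 c.2.2 r.2.1, r.1, if r.2.2 then c.2.2 + 1 else c.2.2 - 1)

/-- The run of the machine started in state `q_R` on the all-blank tape at position 0. -/
def BFrun (t : ℕ) : BFCfg := BFstep^[t] (fun _ => none, BFState.qR, 0)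

/-- step on a right-moving configuration -/
lemma BF_step_R (T : ℤ → BFSymb) (p : ℤ) (b : Bool) (h : T p = some b) :
    BFstep (T, BFState.qR, p) = (Function.update T p (some true), BFState.qR, p + 1) := by
  cases b <;> simp [BFstep, h, BFdelta]

lemma BF_step_L (T : ℤ → BFSymb) (p : ℤ) (b : Bool) (h : T p = some b) :
    BFstep (T, BFState.qL, p) = (Function.update T p (some false), BFState.qL, p - 1) := by
  cases b <;> simp [BFstep, h, BFdelta]

lemma BF_step_Rb (T : ℤ → BFSymb) (p : ℤ) (h : T p = none) :
    BFstep (T, BFState.qR, p) = (Function.update T p (some true), BFState.qL, p - 1) := by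
  simp [BFstep, h, BFdelta]

lemma BF_step_Lb (T : ℤ → BFSymb) (p : ℤ) (h : T p = none) :
    BFstep (T, BFState.qL, p) = (Function.update T p (some false), BFState.qR, p + 1) := by
  simp [BFstep, h, BFdelta]

lemma BF_right_sweep (k : ℕ) : ∀ (T : ℤ → BFSymb) (p : ℤ),
    (∀ i : ℕ, i < k → T (p + i) ≠ none) →
    BFstep^[k] (T, BFState.qR, p) =
      (fun x => if p ≤ x ∧ x < p + k then some true else T x, BFState.qR, p + k) := by
  induction k with
  | zero =>
    intro T p _
    simp only [Function.iterate_zero, id_eq]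
    refine Prod.ext ?_ (Prod.ext rfl ?_)
    · funext x
      simp only
      rw [if_neg]
      push_cast
      omega
    · push_cast; ring_nf
  | succ k ih =>
    intro T p h
    have h0 : T p ≠ none := by have := h 0 (Nat.succ_pos k); simpa using this
    obtain ⟨b, hb⟩ := Option.ne_none_iff_exists'.mp h0
    rw [Function.iterate_succ_apply, BF_step_R T p b hb,
      ih (Function.update T p (some true)) (p+1) (by
        intro i hi
        rw [Function.update_of_ne (by omega)]
        have := h (i+1) (by omega)
        push_cast at this ⊢
        convert this using 2
        ring)]
    refine Prod.ext ?_ (Prod.ext rfl ?_)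
    · funext x
      simp only
      by_cases hx : x = p
      · subst hx
        rw [if_neg (by push_cast; omega), if_pos (by push_cast; omega),
          Function.update_self]
      · rw [Function.update_of_ne hx]
        by_cases hc : p ≤ x ∧ x < p + (k+1 : ℕ)
        · rw [if_pos (by push_cast at hc ⊢; omega), if_pos hc]
        · rw [if_neg (by push_cast at hc ⊢; omega), if_neg hc]
    · push_cast; ring

lemma BF_left_sweep (k : ℕ) : ∀ (T : ℤ → BFSymb) (p : ℤ),
    (∀ i : ℕ, i < k → T (p - i) ≠ none) →
    BFstep^[k] (T, BFState.qL, p) =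
      (fun x => if p - k < x ∧ x ≤ p then some false else T x, BFState.qL, p - k) := by
  induction k with
  | zero =>
    intro T p _
    simp only [Function.iterate_zero, id_eq]
    refine Prod.ext ?_ (Prod.ext rfl ?_)
    · funext x
      simp only
      rw [if_neg]
      push_cast
      omega
    · push_cast; ring_nf
  | succ k ih =>
    intro T p h
    have h0 : T p ≠ none := by have := h 0 (Nat.succ_pos k); simpa using this
    obtain ⟨b, hb⟩ := Option.ne_none_iff_exists'.mp h0
    rw [Function.iterate_succ_apply, BF_step_L T p b hb,
      ih (Function.update T p (some false)) (p-1) (by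
        intro i hi
        rw [Function.update_of_ne (by omega)]
        have := h (i+1) (by omega)
        push_cast at this ⊢
        convert this using 2
        ring)]
    refine Prod.ext ?_ (Prod.ext rfl ?_)
    · funext x
      simp only
      by_cases hx : x = p
      · subst hx
        rw [if_neg (by push_cast; omega), if_pos (by push_cast; omega),
          Function.update_self]
      · rw [Function.update_of_ne hx]
        by_cases hc : p - (k+1 : ℕ) < x ∧ x ≤ p
        · rw [if_pos (by push_cast at hc ⊢; omega), if_pos hc]
        · rw [if_neg (by push_cast at hc ⊢; omega), if_neg hc]
    · push_cast; ring

/-- the canonical tape at a turning point -/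
def Ctape (n : ℕ) : ℤ → BFSymb := fun x =>
  if x = -(n:ℤ) then some false else if -(n:ℤ) < x ∧ x < n then some true else none

/-- partial left sweep from a turning configuration -/
lemma BF_phase (n : ℕ) (hn : 1 ≤ n) (i : ℕ) (hi : i ≤ 2*n) :
    BFstep^[i+1] (Ctape n, BFState.qR, (n:ℤ)) =
      (fun x => if (n:ℤ) - 1 - i < x ∧ x ≤ (n:ℤ) - 1 then some false
        else Function.update (Ctape n) n (some true) x, BFState.qL, (n:ℤ) - 1 - i) := by
  have hblank : Ctape n (n:ℤ) = none := by
    unfold Ctape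
    rw [if_neg (by omega), if_neg (by omega)]
  rw [Function.iterate_succ_apply, BF_step_Rb _ _ hblank,
    BF_left_sweep i _ _ (by
      intro j hj
      rw [Function.update_of_ne (by omega)]
      unfold Ctape
      split
      · simp
      · rw [if_pos (by omega)]; simp)]

lemma BF_cycle (n : ℕ) (hn : 1 ≤ n) :
    BFstep^[4*n+3] (Ctape n, BFState.qR, (n:ℤ)) = (Ctape (n+1), BFState.qR, ((n:ℤ)+1)) := by
  have e : 4*n+3 = (2*n+1) + (1 + (2*n+1)) := by ring
  rw [e, Function.iterate_add_apply, Function.iterate_add_apply BFstep 1 (2*n+1),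
    BF_phase n hn (2*n) le_rfl, Function.iterate_one,
    BF_step_Lb _ _ (by
      beta_reduce
      rw [if_neg (by omega), Function.update_of_ne (by omega)]
      unfold Ctape
      rw [if_neg (by omega), if_neg (by omega)]),
    BF_right_sweep (2*n+1) _ _ (by
      intro i hi
      simp only [Function.update_apply]
      unfold Ctape
      split_ifs <;> simp_all <;> omega)]
  refine Prod.ext (funext fun x => ?_) (Prod.ext rfl (by push_cast; ring))
  simp only [Function.update_apply]
  unfold Ctape
  split_ifs <;> first | rfl | omega

lemma BF_base : BFrun 3 = (Ctape 1, BFState.qR, 1) := by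
  have h : BFrun 3 = BFstep (BFstep (BFstep (fun _ => none, BFState.qR, 0))) := rfl
  rw [h, BF_step_Rb _ _ rfl,
    BF_step_Lb _ _ (by rw [Function.update_of_ne (by omega)]),
    BF_step_R _ _ true (by norm_num [Function.update_apply])]
  refine Prod.ext (funext fun x => ?_) (Prod.ext rfl (by norm_num))
  simp only [Function.update_apply]
  unfold Ctape
  split_ifs <;> first | rfl | omega

lemma BF_at (n : ℕ) (hn : 1 ≤ n) : BFrun (2*n^2+n) = (Ctape n, BFState.qR, (n:ℤ)) := by
  induction n, hn using Nat.le_induction with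
  | base => simpa using BF_base
  | succ n hn ih =>
    have e : 2*(n+1)^2+(n+1) = (4*n+3) + (2*n^2+n) := by ring
    show BFstep^[2*(n+1)^2+(n+1)] _ = _
    rw [e, Function.iterate_add_apply,
      show BFstep^[2*n^2+n] ((fun _ => none, BFState.qR, 0) : BFCfg)
        = (Ctape n, BFState.qR, (n:ℤ)) from ih,
      BF_cycle n hn]
    refine Prod.ext rfl (Prod.ext rfl (by push_cast; ring))

lemma BF_pos (n j : ℕ) (hn : 1 ≤ n) (hj : j ≤ 2*n+1) :
    (BFrun (2*n^2+n+j)).2.2 = (n:ℤ) - j := by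
  have e : 2*n^2+n+j = j + (2*n^2+n) := by ring
  rw [e]
  show (BFstep^[j + (2*n^2+n)] _).2.2 = _
  rw [Function.iterate_add_apply,
    show BFstep^[2*n^2+n] ((fun _ => none, BFState.qR, 0) : BFCfg)
      = (Ctape n, BFState.qR, (n:ℤ)) from BF_at n hn]
  cases j with
  | zero => simp
  | succ i =>
    rw [BF_phase n hn i (by omega)]
    show (n:ℤ) - 1 - i = (n:ℤ) - (i+1:ℕ)
    push_cast; ring

/-- The head of the back-and-forth machine visits every tape position infinitely
many times. -/
theorem stmt_10 : ∀ p : ℤ, {t : ℕ | (BFrun t).2.2 = p}.Infinite := by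
  intro p
  apply Set.infinite_of_forall_exists_gt
  intro a
  set n := max (a+1) (p.natAbs+1) with hndef
  have hn1 : 1 ≤ n := le_trans (by omega) (le_max_left (a+1) (p.natAbs+1))
  have hpn : p.natAbs + 1 ≤ n := le_max_right _ _
  have hap : a + 1 ≤ n := le_max_left _ _
  set j := ((n:ℤ) - p).toNat with hjdef
  have hjle : j ≤ 2*n+1 := by omega
  refine ⟨2*n^2+n+j, ?_, ?_⟩
  · show (BFrun (2*n^2+n+j)).2.2 = p
    rw [BF_pos n j hn1 hjle]
    omega
  · have h1 : a < n := by omega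
    have h2 : n ≤ 2*n^2+n+j := by nlinarith
    omega
end

section
/- In the ACA of Construction 1 with the initial configuration for input x, between the update that moves the TM head information (setting a cell's control component to 0) and the subsequent updates that set the old head cell's control to 2 and the new head cell's control to 1, no cell of the configuration other than these two cells changes its state, regardless of which other positions are updated in between. -/
/-- Alphabet of the Construction-1 ACA: a cell holds a tape symbol, a TM state,
a direction (`true` = `R`, `false` = `L`) and a control value in `{0,1,2}`. -/
abbrev C1Cell (Γ Q : Type) := Γ × Q × Bool × Fin 3

/-- The local rule of Construction 1, for a TM with transition function
`δ : Q → Γ → Q × Γ × Bool` (returning new state, written symbol, direction). -/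
def C1rule {Γ Q : Type} (δ : Q → Γ → Q × Γ × Bool) (u v z : C1Cell Γ Q) : C1Cell Γ Q :=
  if u.2.2.2 = 1 ∧ u.2.2.1 = true ∧ v.2.2.2 = 2 then
    let r := δ u.2.1 v.1; (r.2.1, r.1, r.2.2, (0 : Fin 3))
  else if v.2.2.2 = 1 ∧ v.2.2.1 = true ∧ z.2.2.2 = 0 then
    (v.1, v.2.1, v.2.2.1, (2 : Fin 3))
  else if u.2.2.2 = 2 ∧ u.2.2.1 = true ∧ v.2.2.2 = 0 then
    (v.1, v.2.1, v.2.2.1, (1 : Fin 3))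
  else if z.2.2.2 = 1 ∧ z.2.2.1 = false ∧ v.2.2.2 = 2 then
    let r := δ z.2.1 v.1; (r.2.1, r.1, r.2.2, (0 : Fin 3))
  else if v.2.2.2 = 1 ∧ v.2.2.1 = false ∧ u.2.2.2 = 0 then
    (v.1, v.2.1, v.2.2.1, (2 : Fin 3))
  else if z.2.2.2 = 2 ∧ z.2.2.1 = false ∧ v.2.2.2 = 0 then
    (v.1, v.2.1, v.2.2.1, (1 : Fin 3))
  else v

/-- In Construction 1, suppose the current configuration `d` has a unique cell `i`
with control `1` (the old head), a unique cell `j` with control `0` (the new head,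
lying in the direction of movement of cell `i`), and all other cells have control
`2`.  Then updating any cell `k` other than `i` and `j` leaves it unchanged: no
cell of the configuration other than these two cells can change its state,
regardless of which positions are updated in between. -/
theorem stmt_14 {Γ Q : Type} (δ : Q → Γ → Q × Γ × Bool)
    (d : ℤ → C1Cell Γ Q) (i j : ℤ)
    (hi : (d i).2.2.2 = 1) (hj : (d j).2.2.2 = 0)
    (hdir : if (d i).2.2.1 then j = i + 1 else j = i - 1)
    (hrest : ∀ l : ℤ, l ≠ i → l ≠ j → (d l).2.2.2 = 2) :
    ∀ k : ℤ, k ≠ i → k ≠ j → C1rule δ (d (k - 1)) (d k) (d (k + 1)) = d k := by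
  intro k hki hkj
  have hvk : (d k).2.2.2 = 2 := hrest k hki hkj
  have hctrl1 : ∀ l : ℤ, (d l).2.2.2 = 1 → l = i := by
    intro l hl
    by_contra hli
    by_cases hlj : l = j
    · rw [hlj, hj] at hl; exact absurd hl (by decide)
    · rw [hrest l hli hlj] at hl; exact absurd hl (by decide)
  unfold C1rule
  split_ifs with h1 h2 h3 h4 h5 h6
  · have hki1 : k - 1 = i := hctrl1 _ h1.1
    rw [← hki1, h1.2.1] at hdir
    simp only [if_true] at hdir
    omega
  · rw [hvk] at h2; exact absurd h2.1 (by decide)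
  · rw [hvk] at h3; exact absurd h3.2.2 (by decide)
  · have hki1 : k + 1 = i := hctrl1 _ h4.1
    rw [← hki1, h4.2.1] at hdir
    simp only [Bool.false_eq_true, if_false] at hdir
    omega
  · rw [hvk] at h5; exact absurd h5.1 (by decide)
  · rw [hvk] at h6; exact absurd h6.2.2 (by decide)
  · rfl
end
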